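/- Let G be a discrete finitely generated group and let (X, G) be a minimal topological dynamical system containing a regularly recurrent (respectively, strongly regularly recurrent) point. Then every point of X is regularly recurrent (respectively, strongly regularly recurrent) if and only if (X, G) is conjugate — i.e., G-equivariantly homeomorphic — to a subodometer (respectively, to an odometer). -/

import Mathlib

/-!
For a normal subgroup `Λ` of finite index, the closures `C(y)` of the `Λ`-orbits are clopen
blocks of the `G`-action: by minimality finitely many translates of `C(y)` cover `X`, and if
`C(y) ⊆ g • C(y)` the increasing chain `gᵏ • C(y)` must close up because `g ^ [G : Λ] ∈ Λ`.
Regular recurrence at every point and compactness give such `Λ` whose blocks have arbitrarily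
small diameter, hence a decreasing sequence `Λₙ`; coding a point by the translates of
`Wₙ = C_{Λₙ}(x₀)` containing it is a conjugacy onto the subodometer of the stabilizers of `Wₙ`.
Under strong regular recurrence, a clopen neighbourhood of `x₀` whose return-time set is a
normal subgroup `N` forces the stabilizer of `C_N(x₀)` to be `N`, so the subodometer is an
odometer. Conversely, the return times of a point of a subodometer to a cylinder form the
stabilizer of a coset of `Γₙ`: it has finite index, and equals `Γₙ` when `Γₙ` is normal.
-/

open Pointwise MeasureTheory

/-- Compatibility condition defining the inverse limit `lim_{←i} (G/Γᵢ, πᵢ)`: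
a sequence of cosets is compatible if any representative of the `(i+1)`-th coordinate
also represents the `i`-th coordinate. -/
def Compat {G : Type*} [Group G] (Γ : ℕ → Subgroup G) (x : ∀ i, G ⧸ Γ i) : Prop :=
  ∀ (i : ℕ) (g : G),
    (QuotientGroup.mk g : G ⧸ Γ (i + 1)) = x (i + 1) →
    (QuotientGroup.mk g : G ⧸ Γ i) = x i

/-- The subodometer `←G = lim_{←i} (G/Γᵢ, πᵢ)` associated to a sequence of subgroups. -/
def Subodometer {G : Type*} [Group G] (Γ : ℕ → Subgroup G) : Type _ :=
  { x : ∀ i, G ⧸ Γ i // Compat Γ x }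

/-- Topology of the subodometer: subspace topology of the product of the (discrete)
coset spaces. -/
instance {G : Type*} [Group G] (Γ : ℕ → Subgroup G) [TopologicalSpace G] :
    TopologicalSpace (Subodometer Γ) :=
  instTopologicalSpaceSubtype

lemma compat_smul {G : Type*} [Group G] (Γ : ℕ → Subgroup G) (g : G) (x : ∀ i, G ⧸ Γ i)
    (hx : Compat Γ x) : Compat Γ (fun i => g • x i) := by
  intro i h hh
  change (QuotientGroup.mk h : G ⧸ Γ (i + 1)) = g • x (i + 1) at hh
  show (QuotientGroup.mk h : G ⧸ Γ i) = g • x i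
  obtain ⟨a, ha⟩ := QuotientGroup.mk_surjective (x (i + 1))
  have h1 : (QuotientGroup.mk (g * a) : G ⧸ Γ (i + 1)) = g • x (i + 1) := by
    rw [← ha]; rfl
  rw [← h1] at hh
  have h2 : (QuotientGroup.mk (g⁻¹ * h) : G ⧸ Γ (i + 1)) = QuotientGroup.mk a := by
    rw [QuotientGroup.eq] at hh ⊢
    simpa [mul_assoc] using hh
  have h3 := hx i _ (h2.trans ha)
  have h4 : (QuotientGroup.mk (g * (g⁻¹ * h)) : G ⧸ Γ i) = g • x i := by
    rw [show (QuotientGroup.mk (g * (g⁻¹ * h)) : G ⧸ Γ i)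
        = g • (QuotientGroup.mk (g⁻¹ * h) : G ⧸ Γ i) from rfl, h3]
  simpa [mul_assoc] using h4

/-- The action of `G` on the subodometer by coordinatewise left multiplication. -/
instance {G : Type*} [Group G] (Γ : ℕ → Subgroup G) : MulAction G (Subodometer Γ) where
  smul g x := ⟨fun i => g • x.1 i, compat_smul Γ g x.1 x.2⟩
  one_smul x := Subtype.ext (funext fun i => one_smul G (x.1 i))
  mul_smul g h x := Subtype.ext (funext fun i => mul_smul g h (x.1 i))

/-- The distinguished point `e` of the subodometer: the sequence of cosets of the
neutral element. -/
def odoE {G : Type*} [Group G] (Γ : ℕ → Subgroup G) (hΓ : ∀ i, Γ (i + 1) ≤ Γ i) :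
    Subodometer Γ :=
  ⟨fun i => QuotientGroup.mk 1, by
    intro i g hg
    rw [QuotientGroup.eq] at hg ⊢
    exact hΓ i hg⟩

/-- The canonical map `τ : G → ←G`, `τ(g) = (gΓᵢ)ᵢ`. -/
def odoTau {G : Type*} [Group G] (Γ : ℕ → Subgroup G) (hΓ : ∀ i, Γ (i + 1) ≤ Γ i) (g : G) :
    Subodometer Γ :=
  ⟨fun i => QuotientGroup.mk g, by
    intro i h hh
    rw [QuotientGroup.eq] at hh ⊢
    exact hΓ i hh⟩

/-- The set of return times of `x` to `A`: `T_A(x) = {g ∈ G : g • x ∈ A}`. -/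
def ReturnTimes (G : Type*) {X : Type*} [SMul G X] (x : X) (A : Set X) : Set G :=
  {g : G | g • x ∈ A}

/-- A point `x` is regularly recurrent if every open neighborhood of `x` contains the
`Γ`-orbit of `x` for some finite-index subgroup `Γ` of `G`. -/
def RegularlyRecurrent (G : Type*) {X : Type*} [Group G] [TopologicalSpace X] [MulAction G X]
    (x : X) : Prop :=
  ∀ V : Set X, IsOpen V → x ∈ V →
    ∃ Γ : Subgroup G, Γ.FiniteIndex ∧ (Γ : Set G) ⊆ ReturnTimes G x V

/-- A point `x` is strongly regularly recurrent if every open neighborhood `V` of `x`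
contains a clopen neighborhood `W` of `x` whose return-time set `T_W(x)` is a
finite-index normal subgroup of `G`. -/
def StronglyRegularlyRecurrent (G : Type*) {X : Type*} [Group G] [TopologicalSpace X]
    [MulAction G X] (x : X) : Prop :=
  ∀ V : Set X, IsOpen V → x ∈ V →
    ∃ W : Set X, IsClopen W ∧ x ∈ W ∧ W ⊆ V ∧
      ∃ Γ : Subgroup G, Γ.Normal ∧ Γ.FiniteIndex ∧ ReturnTimes G x W = (Γ : Set G)

open MulAction Set

instance {G : Type*} [Group G] [TopologicalSpace G] [DiscreteTopology G] (H : Subgroup G) :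
    DiscreteTopology (G ⧸ H) :=
  discreteTopology_iff_forall_isOpen.mpr fun _ => isOpen_coinduced.mpr (isOpen_discrete _)

instance {G : Type*} [Group G] [TopologicalSpace G] [DiscreteTopology G] (Γ : ℕ → Subgroup G) :
    T2Space (Subodometer Γ) :=
  inferInstanceAs (T2Space {x : ∀ i, G ⧸ Γ i // Compat Γ x})

lemma QuotientGroup.mk_eq_mk_iff_smul_set_eq {G X : Type*} [Group G] [MulAction G X]
    (W : Set X) (g h : G) : (g : G ⧸ stabilizer G W) = h ↔ g • W = h • W := by
  rw [QuotientGroup.eq, mem_stabilizer_iff, mul_smul, inv_smul_eq_iff, eq_comm]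

lemma stabilizer_coset_of_normal {G : Type*} [Group G] (H : Subgroup G) [H.Normal]
    (q : G ⧸ H) : stabilizer G q = H := by
  obtain ⟨g₀, rfl⟩ := QuotientGroup.mk_surjective q
  ext g
  rw [mem_stabilizer_iff, ← QuotientGroup.eq_one_iff]
  show (g : G ⧸ H) * g₀ = g₀ ↔ (g : G ⧸ H) = 1
  exact mul_eq_right

lemma finiteIndex_stabilizer_coset {G : Type*} [Group G] (H : Subgroup G) [hH : H.FiniteIndex]
    (q : G ⧸ H) : (stabilizer G q).FiniteIndex :=
  ⟨by rw [index_stabilizer_of_transitive]; exact hH.index_ne_zero⟩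

lemma returnTimes_preimage {G X Y : Type*} [SMul G X] [SMul G Y] {φ : X → Y}
    (hφ : ∀ (g : G) (x : X), φ (g • x) = g • φ x) (x : X) (U : Set Y) :
    ReturnTimes G x (φ ⁻¹' U) = ReturnTimes G (φ x) U := by
  ext g
  show φ (g • x) ∈ U ↔ g • φ x ∈ U
  rw [hφ]

lemma StronglyRegularlyRecurrent.regularlyRecurrent {G X : Type*} [Group G] [TopologicalSpace X]
    [MulAction G X] {x : X} (h : StronglyRegularlyRecurrent G x) : RegularlyRecurrent G x := by
  intro V hV hxV
  obtain ⟨W, -, -, hWV, Γ, -, hΓ, hret⟩ := h V hV hxV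
  exact ⟨Γ, hΓ, fun g hg => hWV (hret.symm ▸ hg : g ∈ ReturnTimes G x W)⟩

section Conjugacy

variable {G X Y : Type*} [Group G] [TopologicalSpace X] [TopologicalSpace Y]
  [MulAction G X] [MulAction G Y] (φ : X ≃ₜ Y)
  (hφ : ∀ (g : G) (x : X), φ (g • x) = g • φ x)
include hφ

lemma RegularlyRecurrent.of_conj {x : X} (h : RegularlyRecurrent G (φ x)) :
    RegularlyRecurrent G x := by
  intro V hV hxV
  obtain ⟨Γ, hΓ, hsub⟩ := h (φ '' V) (φ.isOpen_image.2 hV) (mem_image_of_mem φ hxV)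
  refine ⟨Γ, hΓ, ?_⟩
  rwa [← φ.preimage_image V, returnTimes_preimage hφ]

lemma StronglyRegularlyRecurrent.of_conj {x : X} (h : StronglyRegularlyRecurrent G (φ x)) :
    StronglyRegularlyRecurrent G x := by
  intro V hV hxV
  obtain ⟨W, hW, hxW, hWV, Γ, hΓn, hΓf, hret⟩ :=
    h (φ '' V) (φ.isOpen_image.2 hV) (mem_image_of_mem φ hxV)
  refine ⟨φ ⁻¹' W, hW.preimage φ.continuous, hxW, ?_, Γ, hΓn, hΓf, ?_⟩
  · rw [← φ.preimage_image V]
    exact preimage_mono hWV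
  · rw [returnTimes_preimage hφ, hret]

end Conjugacy

namespace Subodometer

variable {G : Type*} [Group G] {Γ : ℕ → Subgroup G}

lemma apply_eq_of_le {x y : Subodometer Γ} {i n : ℕ} (hin : i ≤ n) (h : x.1 n = y.1 n) :
    x.1 i = y.1 i := by
  induction n, hin using Nat.le_induction with
  | base => exact h
  | succ n _ ih =>
    apply ih
    obtain ⟨g, hg⟩ := QuotientGroup.mk_surjective (x.1 (n + 1))
    rw [← x.2 n g hg, y.2 n g (hg.trans h)]

def cylinder (p : Subodometer Γ) (n : ℕ) : Set (Subodometer Γ) := {x | x.1 n = p.1 n}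

lemma returnTimes_cylinder (p : Subodometer Γ) (n : ℕ) :
    ReturnTimes G p (cylinder p n) = stabilizer G (p.1 n) :=
  rfl

variable [TopologicalSpace G]

lemma isClopen_cylinder [DiscreteTopology G] (p : Subodometer Γ) (n : ℕ) :
    IsClopen (cylinder p n) :=
  (isClopen_discrete {p.1 n}).preimage ((continuous_apply n).comp continuous_subtype_val)

lemma exists_cylinder_subset {U : Set (Subodometer Γ)} (hU : IsOpen U) {p : Subodometer Γ}
    (hp : p ∈ U) : ∃ n, cylinder p n ⊆ U := by
  obtain ⟨V, hV, rfl⟩ := isOpen_induced_iff.mp hU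
  obtain ⟨I, u, hu, hIV⟩ := isOpen_pi_iff.mp hV p.1 hp
  refine ⟨I.sup id, fun x hx => hIV fun i hi => ?_⟩
  show x.1 i ∈ u i
  rw [apply_eq_of_le (i := i) (Finset.le_sup (f := id) hi) hx]
  exact (hu i hi).2

lemma regularlyRecurrent (hfin : ∀ n, (Γ n).FiniteIndex) (p : Subodometer Γ) :
    RegularlyRecurrent G p := by
  intro V hV hpV
  obtain ⟨n, hn⟩ := exists_cylinder_subset hV hpV
  refine ⟨stabilizer G (p.1 n), finiteIndex_stabilizer_coset (Γ n) _, ?_⟩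
  rw [← returnTimes_cylinder]
  exact fun g hg => hn hg

lemma stronglyRegularlyRecurrent [DiscreteTopology G] (hnorm : ∀ n, (Γ n).Normal)
    (hfin : ∀ n, (Γ n).FiniteIndex) (p : Subodometer Γ) : StronglyRegularlyRecurrent G p := by
  intro V hV hpV
  obtain ⟨n, hn⟩ := exists_cylinder_subset hV hpV
  refine ⟨cylinder p n, isClopen_cylinder p n, rfl, hn, Γ n, hnorm n, hfin n, ?_⟩
  rw [returnTimes_cylinder, stabilizer_coset_of_normal]

end Subodometer

section Coding

variable {G X : Type*} [Group G] [MulAction G X] {W : ℕ → Set X}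
  (hcover : ∀ n (y : X), ∃ g : G, y ∈ g • W n)

noncomputable def blockCode (y : X) (n : ℕ) : G ⧸ stabilizer G (W n) :=
  (hcover n y).choose

variable (hblock : ∀ n, IsBlock G (W n))
include hblock

lemma mk_eq_blockCode_iff {y : X} {n : ℕ} {g : G} :
    (g : G ⧸ stabilizer G (W n)) = blockCode hcover y n ↔ y ∈ g • W n := by
  have hy := (hcover n y).choose_spec
  rw [blockCode, QuotientGroup.mk_eq_mk_iff_smul_set_eq]
  exact ⟨fun h => h ▸ hy, fun hg => (hblock n).smul_eq_smul_of_nonempty ⟨y, hg, hy⟩⟩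

lemma blockCode_smul (g : G) (y : X) (n : ℕ) :
    blockCode hcover (g • y) n = g • blockCode hcover y n := by
  obtain ⟨h, hh⟩ := QuotientGroup.mk_surjective (blockCode hcover y n)
  have hy := (mk_eq_blockCode_iff hcover hblock).1 hh
  calc blockCode hcover (g • y) n = ((g * h : G) : G ⧸ stabilizer G (W n)) := by
        refine ((mk_eq_blockCode_iff hcover hblock).2 ?_).symm
        rw [mul_smul]
        exact smul_mem_smul_set hy
    _ = g • blockCode hcover y n := by rw [← hh]; rfl

variable (hanti : ∀ n, W (n + 1) ⊆ W n)
include hanti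

lemma compat_blockCode (y : X) : Compat (fun n => stabilizer G (W n)) (blockCode hcover y) :=
  fun n _ hg => (mk_eq_blockCode_iff hcover hblock).2
    (smul_set_mono (hanti n) ((mk_eq_blockCode_iff hcover hblock).1 hg))

noncomputable def blockCoding (y : X) : Subodometer (fun n => stabilizer G (W n)) :=
  ⟨blockCode hcover y, compat_blockCode hcover hblock hanti y⟩

lemma blockCoding_smul (g : G) (y : X) :
    blockCoding hcover hblock hanti (g • y) = g • blockCoding hcover hblock hanti y :=
  Subtype.ext (funext (blockCode_smul hcover hblock g y))

lemma blockCoding_injective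
    (hsep : ∀ y z : X, y ≠ z → ∃ n, ∃ g : G, y ∈ g • W n ∧ z ∉ g • W n) :
    Function.Injective (blockCoding hcover hblock hanti) := by
  intro y z hyz
  by_contra hne
  obtain ⟨n, g, hy, hz⟩ := hsep y z hne
  have hcode : blockCode hcover y n = blockCode hcover z n :=
    congr_fun (congr_arg Subtype.val hyz) n
  rw [← mk_eq_blockCode_iff hcover hblock] at hy hz
  exact hz (hy.trans hcode)

lemma blockCoding_surjective [TopologicalSpace X] [ContinuousConstSMul G X] [CompactSpace X]
    (hclosed : ∀ n, IsClosed (W n)) (hne : ∀ n, (W n).Nonempty) :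
    Function.Surjective (blockCoding hcover hblock hanti) := by
  intro p
  set A : ℕ → Set X := fun n => (p.1 n).out • W n
  have hA : ∀ n, (A n).Nonempty := fun n => (hne n).smul_set
  have hAclosed : ∀ n, IsClosed (A n) := fun n => (hclosed n).smul _
  have hAanti : ∀ n, A (n + 1) ⊆ A n := by
    intro n
    have hout : ((p.1 (n + 1)).out : G ⧸ stabilizer G (W n)) = (p.1 n).out := by
      rw [p.2 n _ (QuotientGroup.out_eq' _), QuotientGroup.out_eq']
    calc A (n + 1) ⊆ (p.1 (n + 1)).out • W n := smul_set_mono (hanti n)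
      _ = A n := (QuotientGroup.mk_eq_mk_iff_smul_set_eq _ _ _).1 hout
  obtain ⟨y, hy⟩ := IsCompact.nonempty_iInter_of_sequence_nonempty_isCompact_isClosed A hAanti
    hA (hAclosed 0).isCompact hAclosed
  refine ⟨y, Subtype.ext (funext fun n => ?_)⟩
  rw [← QuotientGroup.out_eq' (p.1 n)]
  exact ((mk_eq_blockCode_iff hcover hblock).2 (mem_iInter.1 hy n)).symm

lemma continuous_blockCoding [TopologicalSpace X] [ContinuousConstSMul G X]
    [TopologicalSpace G] [DiscreteTopology G] (hopen : ∀ n, IsOpen (W n)) :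
    Continuous (blockCoding hcover hblock hanti) := by
  refine Continuous.subtype_mk (continuous_pi fun n => continuous_discrete_rng.2 fun q => ?_) _
  obtain ⟨g, rfl⟩ := QuotientGroup.mk_surjective q
  have : (fun y => blockCode hcover y n) ⁻¹' {(g : G ⧸ stabilizer G (W n))} = g • W n :=
    Set.ext fun y => eq_comm.trans (mk_eq_blockCode_iff hcover hblock)
  rw [this]
  exact (hopen n).smul g

end Coding

theorem exists_conj_subodometer_of_blocks {G X : Type*} [Group G] [TopologicalSpace G]
    [DiscreteTopology G] [TopologicalSpace X] [CompactSpace X] [MulAction G X]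
    [ContinuousConstSMul G X] {W : ℕ → Set X} (hblock : ∀ n, IsBlock G (W n))
    (hcover : ∀ n (y : X), ∃ g : G, y ∈ g • W n) (hclopen : ∀ n, IsClopen (W n))
    (hne : ∀ n, (W n).Nonempty) (hanti : ∀ n, W (n + 1) ⊆ W n)
    (hsep : ∀ y z : X, y ≠ z → ∃ n, ∃ g : G, y ∈ g • W n ∧ z ∉ g • W n) :
    ∃ φ : X ≃ₜ Subodometer (fun n => stabilizer G (W n)),
      ∀ (g : G) (x : X), φ (g • x) = g • φ x :=
  ⟨(continuous_blockCoding hcover hblock hanti fun n => (hclopen n).isOpen).homeoOfEquivCompactToT2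
      (f := Equiv.ofBijective _ ⟨blockCoding_injective hcover hblock hanti hsep,
        blockCoding_surjective hcover hblock hanti (fun n => (hclopen n).isClosed) hne⟩),
    blockCoding_smul hcover hblock hanti⟩

lemma smul_set_eq_of_subset_smul_set_of_pow {G X : Type*} [Group G] [MulAction G X] {s : Set X}
    {g : G} (hs : s ⊆ g • s) {n : ℕ} (hn : 0 < n) (hpow : g ^ n • s = s) : g • s = s := by
  have hmono : Monotone fun k : ℕ => g ^ k • s := monotone_nat_of_le_succ fun k => by
    simp only [pow_succ, mul_smul]
    exact smul_set_mono hs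
  refine subset_antisymm ?_ hs
  calc g • s = g ^ 1 • s := by rw [pow_one]
    _ ⊆ g ^ n • s := hmono hn
    _ = s := hpow

lemma IsBlock.isOpen_of_iUnion_eq_univ {G X ι : Type*} [Group G] [TopologicalSpace X]
    [MulAction G X] [ContinuousConstSMul G X] [Finite ι] {B : Set X} (hB : IsBlock G B)
    (hclosed : IsClosed B) (g : ι → G) (hcover : ⋃ i, g i • B = univ) : IsOpen B := by
  have hcompl : Bᶜ = ⋃ i ∈ {i | g i • B ≠ B}, g i • B := by
    ext y
    simp only [mem_compl_iff, mem_iUnion, mem_ofPred_eq, exists_prop]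
    constructor
    · intro hy
      obtain ⟨i, hi⟩ := mem_iUnion.1 (hcover.symm ▸ mem_univ y : y ∈ ⋃ i, g i • B)
      exact ⟨i, fun h => hy (h ▸ hi), hi⟩
    · rintro ⟨i, hne, hi⟩ hy
      exact (hB.disjoint_smul_of_ne hne).notMem_of_mem_left hi hy
  rw [← isClosed_compl_iff, hcompl]
  exact (toFinite _).isClosed_biUnion fun i _ => hclosed.smul _

section OrbitClosure

variable {G X : Type*} [Group G] [TopologicalSpace X] [MulAction G X]

def orbitClosure (Λ : Subgroup G) (y : X) : Set X := closure (orbit Λ y)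

lemma isClosed_orbitClosure (Λ : Subgroup G) (y : X) : IsClosed (orbitClosure Λ y) :=
  isClosed_closure

lemma mem_orbitClosure_self (Λ : Subgroup G) (y : X) : y ∈ orbitClosure Λ y :=
  subset_closure (mem_orbit_self y)

lemma orbitClosure_mono {Λ Λ' : Subgroup G} (h : Λ ≤ Λ') (y : X) :
    orbitClosure Λ y ⊆ orbitClosure Λ' y :=
  closure_mono fun _ ⟨γ, hγ⟩ => ⟨⟨γ, h γ.2⟩, hγ⟩

lemma orbitClosure_smul_of_mem {Λ : Subgroup G} {γ : G} (hγ : γ ∈ Λ) (y : X) :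
    orbitClosure Λ (γ • y) = orbitClosure Λ y :=
  congr_arg closure (orbit_smul (⟨γ, hγ⟩ : Λ) y)

variable [ContinuousConstSMul G X] {Λ : Subgroup G}

lemma iUnion_smul_orbitClosure [Λ.FiniteIndex] [IsMinimal G X] (y : X) :
    ⋃ q : G ⧸ Λ, q.out • orbitClosure Λ y = univ := by
  refine eq_univ_of_univ_subset ?_
  rw [← (dense_orbit G y).closure_eq]
  refine closure_minimal ?_ (isClosed_iUnion_of_finite fun q => (isClosed_orbitClosure Λ y).smul _)
  rintro _ ⟨g, rfl⟩
  obtain ⟨γ, hγ⟩ := QuotientGroup.mk_out_eq_mul Λ g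
  have hgy : g • y = (g : G ⧸ Λ).out • ((γ : G)⁻¹ • y) := by
    rw [hγ, mul_smul, smul_inv_smul]
  refine mem_iUnion.2 ⟨g, ?_⟩
  rw [show (fun m : G => m • y) g = g • y from rfl, hgy]
  exact smul_mem_smul_set (subset_closure (mem_orbit y γ⁻¹))

lemma exists_mem_smul_orbitClosure [Λ.FiniteIndex] [IsMinimal G X] (y z : X) :
    ∃ g : G, z ∈ g • orbitClosure Λ y := by
  obtain ⟨q, hq⟩ := mem_iUnion.1 ((iUnion_smul_orbitClosure (Λ := Λ) y).symm ▸ mem_univ z)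
  exact ⟨q.out, hq⟩

variable [Λ.Normal]

lemma smul_orbitClosure (g : G) (y : X) : g • orbitClosure Λ y = orbitClosure Λ (g • y) := by
  rw [orbitClosure, ← closure_smul, smul_orbit_eq_orbit_smul]
  rfl

lemma orbitClosure_subset_of_mem {y z : X} (h : y ∈ orbitClosure Λ z) :
    orbitClosure Λ y ⊆ orbitClosure Λ z := by
  refine closure_minimal ?_ (isClosed_orbitClosure Λ z)
  rintro _ ⟨γ, rfl⟩
  rw [← orbitClosure_smul_of_mem γ.2 z, ← smul_orbitClosure]
  exact smul_mem_smul_set h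

variable [Λ.FiniteIndex] [IsMinimal G X]

lemma mem_orbitClosure_comm {y z : X} (h : y ∈ orbitClosure Λ z) : z ∈ orbitClosure Λ y := by
  obtain ⟨g, hg⟩ := exists_mem_smul_orbitClosure (Λ := Λ) y z
  have hsub : orbitClosure Λ y ⊆ g • orbitClosure Λ y := by
    rw [smul_orbitClosure] at hg ⊢
    exact (orbitClosure_subset_of_mem h).trans (orbitClosure_subset_of_mem hg)
  have hpow : g ^ Λ.index • orbitClosure Λ y = orbitClosure Λ y := by
    rw [smul_orbitClosure, orbitClosure_smul_of_mem (Λ.pow_index_mem g)]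
  rwa [← smul_set_eq_of_subset_smul_set_of_pow hsub (Nat.pos_of_ne_zero
    Subgroup.FiniteIndex.index_ne_zero) hpow]

lemma orbitClosure_eq_of_mem {y z : X} (h : y ∈ orbitClosure Λ z) :
    orbitClosure Λ y = orbitClosure Λ z :=
  (orbitClosure_subset_of_mem h).antisymm (orbitClosure_subset_of_mem (mem_orbitClosure_comm h))

lemma isBlock_orbitClosure (y : X) : IsBlock G (orbitClosure Λ y) := by
  rw [isBlock_iff_smul_eq_smul_of_nonempty]
  rintro g h ⟨p, hpg, hph⟩
  rw [smul_orbitClosure] at hpg hph ⊢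
  rw [smul_orbitClosure, ← orbitClosure_eq_of_mem hpg, orbitClosure_eq_of_mem hph]

lemma isClopen_orbitClosure (y : X) : IsClopen (orbitClosure Λ y) :=
  ⟨isClosed_orbitClosure Λ y, IsBlock.isOpen_of_iUnion_eq_univ (isBlock_orbitClosure y)
    (isClosed_orbitClosure Λ y) _ (iUnion_smul_orbitClosure y)⟩

lemma smul_mem_orbitClosure_iff_mem_stabilizer (g : G) (y : X) :
    g • y ∈ orbitClosure Λ y ↔ g ∈ stabilizer G (orbitClosure Λ y) := by
  rw [mem_stabilizer_iff, smul_orbitClosure]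
  exact ⟨orbitClosure_eq_of_mem, fun h => h ▸ mem_orbitClosure_self Λ (g • y)⟩

lemma le_stabilizer_orbitClosure (y : X) : Λ ≤ stabilizer G (orbitClosure Λ y) := fun γ hγ =>
  (smul_mem_orbitClosure_iff_mem_stabilizer γ y).1
    (subset_closure (mem_orbit y (⟨γ, hγ⟩ : Λ)))

lemma stabilizer_orbitClosure_mono {Λ' : Subgroup G} [Λ'.Normal] [Λ'.FiniteIndex]
    (h : Λ ≤ Λ') (y : X) :
    stabilizer G (orbitClosure Λ y) ≤ stabilizer G (orbitClosure Λ' y) := fun g hg =>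
  (smul_mem_orbitClosure_iff_mem_stabilizer g y).1 (orbitClosure_mono h y
    ((smul_mem_orbitClosure_iff_mem_stabilizer g y).2 hg))

lemma orbitClosure_subset_of_subset {Λ' : Subgroup G} [Λ'.Normal] [Λ'.FiniteIndex] {x₀ : X}
    (h : orbitClosure Λ x₀ ⊆ orbitClosure Λ' x₀) (y : X) :
    orbitClosure Λ y ⊆ orbitClosure Λ' y := by
  obtain ⟨g, hg⟩ := exists_mem_smul_orbitClosure (Λ := Λ) x₀ y
  have hg' : y ∈ orbitClosure Λ' (g • x₀) :=
    smul_orbitClosure (Λ := Λ') g x₀ ▸ smul_set_mono h hg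
  rw [smul_orbitClosure] at hg
  rw [orbitClosure_eq_of_mem hg, orbitClosure_eq_of_mem hg', ← smul_orbitClosure,
    ← smul_orbitClosure]
  exact smul_set_mono h

end OrbitClosure

def partialInf {G : Type*} [Group G] (M : ℕ → Subgroup G) (n : ℕ) : Subgroup G :=
  ⨅ k ∈ Finset.range (n + 1), M k

namespace partialInf

variable {G : Type*} [Group G] (M : ℕ → Subgroup G)

instance [∀ n, (M n).Normal] (n : ℕ) : (partialInf M n).Normal :=
  Subgroup.normal_iInf_normal fun _ => Subgroup.normal_iInf_normal fun _ => inferInstance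

instance [∀ n, (M n).FiniteIndex] (n : ℕ) : (partialInf M n).FiniteIndex :=
  Subgroup.finiteIndex_iInf' M fun _ _ => inferInstance

lemma le_of_le {k n : ℕ} (h : k ≤ n) : partialInf M n ≤ M k :=
  biInf_le M (Finset.mem_range_succ_iff.2 h)

lemma succ_le (n : ℕ) : partialInf M (n + 1) ≤ partialInf M n :=
  biInf_mono fun _ hk => Finset.range_subset_range.2 (by omega) hk

end partialInf

section Mesh

variable {G X : Type*} [Group G] [MetricSpace X] [CompactSpace X] [MulAction G X]
  [ContinuousConstSMul G X] [IsMinimal G X]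

lemma exists_orbitClosure_dist_lt (h : ∀ x : X, RegularlyRecurrent G x) {ε : ℝ}
    (hε : 0 < ε) : ∃ Λ : Subgroup G, Λ.Normal ∧ Λ.FiniteIndex ∧
      ∀ y : X, ∀ w ∈ orbitClosure Λ y, dist y w < ε := by
  have hsmall : ∀ z : X, ∃ K : Subgroup G, K.Normal ∧ K.FiniteIndex ∧
      orbitClosure K z ⊆ Metric.closedBall z (ε / 3) := by
    intro z
    obtain ⟨Γ, hΓ, hret⟩ :=
      h z _ Metric.isOpen_ball (Metric.mem_ball_self (by positivity : 0 < ε / 3))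
    refine ⟨Γ.normalCore, inferInstance, inferInstance,
      closure_minimal ?_ Metric.isClosed_closedBall⟩
    rintro _ ⟨γ, rfl⟩
    exact Metric.ball_subset_closedBall (hret (Γ.normalCore_le γ.2))
  choose K hKn hKf hK using hsmall
  obtain ⟨t, ht⟩ := isCompact_univ.elim_finite_subcover (fun z => orbitClosure (K z) z)
    (fun z => (isClopen_orbitClosure z).isOpen)
    fun y _ => mem_iUnion.2 ⟨y, mem_orbitClosure_self _ y⟩
  refine ⟨⨅ z ∈ t, K z, Subgroup.normal_iInf_normal fun _ => Subgroup.normal_iInf_normal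
    fun _ => inferInstance, Subgroup.finiteIndex_iInf' K fun _ _ => inferInstance,
    fun y w hw => ?_⟩
  obtain ⟨z, hzt, hyz⟩ := mem_iUnion₂.1 (ht (mem_univ y))
  have hwz : w ∈ orbitClosure (K z) z := orbitClosure_eq_of_mem hyz ▸
    orbitClosure_mono (biInf_le K hzt) y hw
  calc dist y w ≤ dist y z + dist w z := dist_triangle_right y w z
    _ ≤ ε / 3 + ε / 3 := add_le_add (hK z hyz) (hK z hwz)
    _ < ε := by linarith

lemma exists_orbitClosure_dist_lt_of_stronglyRegularlyRecurrent
    (h : ∀ x : X, StronglyRegularlyRecurrent G x) (x₀ : X) {ε : ℝ} (hε : 0 < ε) :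
    ∃ N : Subgroup G, N.Normal ∧ N.FiniteIndex ∧ stabilizer G (orbitClosure N x₀) ≤ N ∧
      ∀ y : X, ∀ w ∈ orbitClosure N y, dist y w < ε := by
  obtain ⟨Λ, hΛn, hΛf, hΛ⟩ :=
    exists_orbitClosure_dist_lt (fun x => (h x).regularlyRecurrent) hε
  obtain ⟨W, hW, -, hWΛ, N, hNn, hNf, hret⟩ :=
    h x₀ _ (isClopen_orbitClosure x₀).isOpen (mem_orbitClosure_self Λ x₀)
  have hNW : orbitClosure N x₀ ⊆ W := by
    refine closure_minimal ?_ hW.isClosed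
    rintro _ ⟨γ, rfl⟩
    exact (hret.symm ▸ γ.2 : (γ : G) ∈ ReturnTimes G x₀ W)
  refine ⟨N, hNn, hNf, fun g hg => ?_, fun y w hw =>
    hΛ y w (orbitClosure_subset_of_subset (hNW.trans hWΛ) y hw)⟩
  have : g ∈ ReturnTimes G x₀ W :=
    hNW ((smul_mem_orbitClosure_iff_mem_stabilizer g x₀).2 hg)
  rwa [hret] at this

end Mesh

section Forward

variable {G X : Type*} [Group G] [TopologicalSpace G] [DiscreteTopology G] [MetricSpace X]
  [CompactSpace X] [MulAction G X] [ContinuousConstSMul G X] [IsMinimal G X]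

theorem exists_conj_subodometer_of_orbitClosure (x₀ : X) (M : ℕ → Subgroup G)
    [∀ n, (M n).Normal] [∀ n, (M n).FiniteIndex]
    (hsmall : ∀ n, ∀ y : X, ∀ w ∈ orbitClosure (M n) y, dist y w < 1 / ((n : ℝ) + 1)) :
    ∃ φ : X ≃ₜ Subodometer (fun n => stabilizer G (orbitClosure (partialInf M n) x₀)),
      ∀ (g : G) (x : X), φ (g • x) = g • φ x := by
  refine exists_conj_subodometer_of_blocks (fun n => isBlock_orbitClosure x₀)
    (fun n => exists_mem_smul_orbitClosure x₀) (fun n => isClopen_orbitClosure x₀)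
    (fun n => ⟨x₀, mem_orbitClosure_self _ x₀⟩)
    (fun n => orbitClosure_mono (partialInf.succ_le M n) x₀) ?_
  intro y z hyz
  obtain ⟨n, hn⟩ := exists_nat_one_div_lt (dist_pos.2 hyz)
  obtain ⟨g, hg⟩ := exists_mem_smul_orbitClosure (Λ := partialInf M n) x₀ y
  refine ⟨n, g, hg, fun hz => hn.not_ge (hsmall n y z ?_).le⟩
  rw [smul_orbitClosure] at hg hz
  rw [← orbitClosure_eq_of_mem hg] at hz
  exact orbitClosure_mono (partialInf.le_of_le M le_rfl) y hz

theorem exists_conj_subodometer (x₀ : X) (h : ∀ x : X, RegularlyRecurrent G x) :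
    ∃ Γ : ℕ → Subgroup G, (∀ i, (Γ i).FiniteIndex) ∧ (∀ i, Γ (i + 1) ≤ Γ i) ∧
      ∃ φ : X ≃ₜ Subodometer Γ, ∀ (g : G) (x : X), φ (g • x) = g • φ x := by
  choose M hMn hMf hM using fun n : ℕ =>
    exists_orbitClosure_dist_lt h (Nat.one_div_pos_of_nat (α := ℝ) (n := n))
  obtain ⟨φ, hφ⟩ := exists_conj_subodometer_of_orbitClosure x₀ M hM
  exact ⟨_, fun n => Subgroup.finiteIndex_of_le (le_stabilizer_orbitClosure x₀),
    fun n => stabilizer_orbitClosure_mono (partialInf.succ_le M n) x₀, φ, hφ⟩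

theorem exists_conj_odometer (x₀ : X) (h : ∀ x : X, StronglyRegularlyRecurrent G x) :
    ∃ Γ : ℕ → Subgroup G, (∀ i, (Γ i).Normal) ∧ (∀ i, (Γ i).FiniteIndex) ∧
      (∀ i, Γ (i + 1) ≤ Γ i) ∧
      ∃ φ : X ≃ₜ Subodometer Γ, ∀ (g : G) (x : X), φ (g • x) = g • φ x := by
  choose M hMn hMf hMstab hM using fun n : ℕ =>
    exists_orbitClosure_dist_lt_of_stronglyRegularlyRecurrent h x₀
      (Nat.one_div_pos_of_nat (α := ℝ) (n := n))
  have hstab : ∀ n, stabilizer G (orbitClosure (partialInf M n) x₀) = partialInf M n := by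
    refine fun n => le_antisymm (fun g hg => ?_) (le_stabilizer_orbitClosure x₀)
    simp only [partialInf, Subgroup.mem_iInf, Finset.mem_range_succ_iff]
    exact fun k hk => hMstab k (stabilizer_orbitClosure_mono (partialInf.le_of_le M hk) x₀ hg)
  obtain ⟨φ, hφ⟩ := exists_conj_subodometer_of_orbitClosure x₀ M hM
  refine ⟨_, fun n => ?_, fun n => ?_, fun n => ?_, φ, hφ⟩ <;> simp only [hstab]
  exacts [inferInstance, inferInstance, partialInf.succ_le M n]

end Forward

theorem statement9_general {G X : Type*} [Group G] [TopologicalSpace G]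
    [DiscreteTopology G] [MetricSpace X] [CompactSpace X] [MulAction G X]
    (hc : ∀ g : G, Continuous fun x : X => g • x)
    (hmin : ∀ x : X, Dense (Set.range fun g : G => g • x)) :
    ((∃ x : X, RegularlyRecurrent G x) →
      ((∀ x : X, RegularlyRecurrent G x) ↔
        ∃ Γ : ℕ → Subgroup G, (∀ i, (Γ i).FiniteIndex) ∧ (∀ i, Γ (i + 1) ≤ Γ i) ∧
          ∃ φ : X ≃ₜ Subodometer Γ, ∀ (g : G) (x : X), φ (g • x) = g • φ x)) ∧
    ((∃ x : X, StronglyRegularlyRecurrent G x) →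
      ((∀ x : X, StronglyRegularlyRecurrent G x) ↔
        ∃ Γ : ℕ → Subgroup G, (∀ i, (Γ i).Normal) ∧ (∀ i, (Γ i).FiniteIndex) ∧
          (∀ i, Γ (i + 1) ≤ Γ i) ∧
          ∃ φ : X ≃ₜ Subodometer Γ, ∀ (g : G) (x : X), φ (g • x) = g • φ x)) := by
  have : ContinuousConstSMul G X := ⟨hc⟩
  have : IsMinimal G X := ⟨hmin⟩
  refine ⟨fun ⟨x₀, _⟩ => ⟨exists_conj_subodometer x₀, ?_⟩,
    fun ⟨x₀, _⟩ => ⟨exists_conj_odometer x₀, ?_⟩⟩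
  · rintro ⟨Γ, hfin, -, φ, hφ⟩ x
    exact .of_conj φ hφ (Subodometer.regularlyRecurrent hfin (φ x))
  · rintro ⟨Γ, hnorm, hfin, -, φ, hφ⟩ x
    exact .of_conj φ hφ (Subodometer.stronglyRegularlyRecurrent hnorm hfin (φ x))

/-- in a minimal system containing a (strongly) regularly recurrent
point, every point is (strongly) regularly recurrent iff the system is conjugate to a
subodometer (an odometer). -/
theorem statement9 {G X : Type*} [Group G] [Group.FG G] [TopologicalSpace G]
    [DiscreteTopology G] [MetricSpace X] [CompactSpace X] [MulAction G X]
    (hc : ∀ g : G, Continuous fun x : X => g • x)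
    (hmin : ∀ x : X, Dense (Set.range fun g : G => g • x)) :
    ((∃ x : X, RegularlyRecurrent G x) →
      ((∀ x : X, RegularlyRecurrent G x) ↔
        ∃ Γ : ℕ → Subgroup G, (∀ i, (Γ i).FiniteIndex) ∧ (∀ i, Γ (i + 1) ≤ Γ i) ∧
          ∃ φ : X ≃ₜ Subodometer Γ, ∀ (g : G) (x : X), φ (g • x) = g • φ x)) ∧
    ((∃ x : X, StronglyRegularlyRecurrent G x) →
      ((∀ x : X, StronglyRegularlyRecurrent G x) ↔
        ∃ Γ : ℕ → Subgroup G, (∀ i, (Γ i).Normal) ∧ (∀ i, (Γ i).FiniteIndex) ∧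
          (∀ i, Γ (i + 1) ≤ Γ i) ∧
          ∃ φ : X ≃ₜ Subodometer Γ, ∀ (g : G) (x : X), φ (g • x) = g • φ x)) :=
  statement9_general hc hmin
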